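/- arXiv:2508.00609 — 4 statements merged into one kernel-verified Lean document; each statement's English description precedes it below -/
import Mathlib

section
/- Let A ∈ ℝ^{n×n}, B ∈ ℝ^{n×1}, S ∈ ℝ^{ν×ν}, L ∈ ℝ^{1×ν} with ν ≤ n; assume the complex spectra of A and S are disjoint, the pair (A, B) is controllable, and the pair (S, L) is observable. Then the unique solution Π ∈ ℝ^{n×ν} of the Sylvester equation A·Π + B·L = Π·S has rank ν (i.e., Π has full column rank). -/
open Matrix

section SylvesterAux

private lemma sylv_map_mulVec {m k : ℕ} (M : Matrix (Fin m) (Fin k) ℝ) (v : Fin k → ℝ) :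
    (M.map (algebraMap ℝ ℂ)) *ᵥ (fun i => (v i : ℂ)) = fun i => (((M *ᵥ v) i : ℝ) : ℂ) := by
  ext i
  simp [Matrix.mulVec, dotProduct, Matrix.map_apply, Complex.ofReal_sum]

end SylvesterAux

/-- If `σ(A) ∩ σ(S) = ∅`, `(A,B)` is controllable (PBH test) and `(S,L)` is
observable (PBH test), with `ν ≤ n`, then any solution `Π` of the Sylvester equation
`A·Π + B·L = Π·S` has full column rank `ν`. -/
theorem sylvester_solution_full_column_rank (n ν : ℕ) (hνn : ν ≤ n)
    (A : Matrix (Fin n) (Fin n) ℝ) (B : Matrix (Fin n) (Fin 1) ℝ)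
    (S : Matrix (Fin ν) (Fin ν) ℝ) (L : Matrix (Fin 1) (Fin ν) ℝ)
    (hdisj : Disjoint (spectrum ℂ (A.map (algebraMap ℝ ℂ)))
      (spectrum ℂ (S.map (algebraMap ℝ ℂ))))
    (hctrb : ∀ lam : ℂ,
      (Matrix.fromCols (A.map (algebraMap ℝ ℂ) - lam • (1 : Matrix (Fin n) (Fin n) ℂ))
        (B.map (algebraMap ℝ ℂ))).rank = n)
    (hobs : ∀ lam : ℂ,
      (Matrix.fromRows (S.map (algebraMap ℝ ℂ) - lam • (1 : Matrix (Fin ν) (Fin ν) ℂ))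
        (L.map (algebraMap ℝ ℂ))).rank = ν)
    (Pi : Matrix (Fin n) (Fin ν) ℝ) (hPi : A * Pi + B * L = Pi * S) :
    Pi.rank = ν := by
  classical
  set c : ℝ →+* ℂ := algebraMap ℝ ℂ with hc
  set A' := A.map c with hA'
  set B' := B.map c with hB'
  set S' := S.map c with hS'
  set L' := L.map c with hL'
  set P' := Pi.map c with hP'
  -- complexified Sylvester equation
  have hPi' : A' * P' + B' * L' = P' * S' := by
    have := congrArg (fun M => M.map c) hPi
    simpa [Matrix.map_add, Matrix.map_mul] using this
  -- key pointwise identity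
  have key : ∀ v : Fin ν → ℂ, P' *ᵥ (S' *ᵥ v) = A' *ᵥ (P' *ᵥ v) + B' *ᵥ (L' *ᵥ v) := by
    intro v
    rw [Matrix.mulVec_mulVec, Matrix.mulVec_mulVec, Matrix.mulVec_mulVec, ← hPi',
      Matrix.add_mulVec]
  -- Step 1: the complexified Π is injective
  have hker' : LinearMap.ker P'.mulVecLin = ⊥ := by
    by_cases hcase : ∀ v : Fin ν → ℂ, P' *ᵥ v = 0 → L' *ᵥ v = 0
    · -- kernel of Π is S-invariant and contained in ker L; use observability
      by_contra hne
      set K := LinearMap.ker P'.mulVecLin with hK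
      have hinv : ∀ x ∈ K, S'.mulVecLin x ∈ K := by
        intro x hx
        have hx0 : P' *ᵥ x = 0 := hx
        have : P' *ᵥ (S' *ᵥ x) = 0 := by
          rw [key x, hx0, hcase x hx0]
          simp
        exact this
      have : Nontrivial K := Submodule.nontrivial_iff_ne_bot.mpr hne
      obtain ⟨μ, hμ⟩ := Module.End.exists_eigenvalue
        ((S'.mulVecLin).restrict (p := K) (q := K) hinv)
      obtain ⟨w, hw⟩ := hμ.exists_hasEigenvector
      have hw1 : S' *ᵥ (w : Fin ν → ℂ) = μ • (w : Fin ν → ℂ) := by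
        have := congrArg (Subtype.val) hw.apply_eq_smul
        simpa [LinearMap.restrict_apply] using this
      have hw0 : P' *ᵥ (w : Fin ν → ℂ) = 0 := w.2
      have hwL : L' *ᵥ (w : Fin ν → ℂ) = 0 := hcase _ hw0
      -- contradiction with observability at μ
      have hrk := hobs μ
      have hkerRow : (Matrix.fromRows (S' - μ • 1) L') *ᵥ (w : Fin ν → ℂ) = 0 := by
        rw [Matrix.fromRows_mulVec, Matrix.sub_mulVec, hw1, hwL]
        ext (i | i) <;> simp [Matrix.smul_mulVec]
      have hwne : (w : Fin ν → ℂ) ≠ 0 := by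
        intro h; exact hw.right (Subtype.ext h)
      have hkerne : LinearMap.ker (Matrix.fromRows (S' - μ • 1) L').mulVecLin ≠ ⊥ := by
        intro h
        exact hwne (by simpa [LinearMap.mem_ker] using
          (Submodule.eq_bot_iff _).mp h (w : Fin ν → ℂ) hkerRow)
      have hrn := LinearMap.finrank_range_add_finrank_ker
        (Matrix.fromRows (S' - μ • 1) L').mulVecLin
      rw [Module.finrank_pi, Fintype.card_fin] at hrn
      have hrk' : Module.finrank ℂ
          (LinearMap.range (Matrix.fromRows (S' - μ • 1) L').mulVecLin) = ν := hrk
      have : Module.finrank ℂ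
          (LinearMap.ker (Matrix.fromRows (S' - μ • 1) L').mulVecLin) = 0 := by
        omega
      exact hkerne (Submodule.finrank_eq_zero.mp this)
    · -- some kernel vector is not killed by L : range Π contains b, is A-invariant, hence = ⊤
      push_neg at hcase
      obtain ⟨v, hv0, hvL⟩ := hcase
      set W := LinearMap.range P'.mulVecLin with hW
      have hbW : ∀ u : Fin 1 → ℂ, B' *ᵥ u ∈ W := by
        intro u
        have h1 : P' *ᵥ (S' *ᵥ v) = B' *ᵥ (L' *ᵥ v) := by
          rw [key v, hv0]; simp
        set α : ℂ := (L' *ᵥ v) 0 with hα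
        have hαne : α ≠ 0 := by
          intro h
          apply hvL
          ext i
          have : i = 0 := Subsingleton.elim i 0
          rw [this]; exact h
        have hBv : ∀ w : Fin 1 → ℂ, B' *ᵥ w = (w 0) • (fun i => B' i 0) := by
          intro w
          ext i
          simp [Matrix.mulVec, dotProduct, Fin.sum_univ_one, mul_comm]
        have hb : (fun i => B' i 0) ∈ W := by
          have h2 : P' *ᵥ (S' *ᵥ v) = α • (fun i => B' i 0) := by
            rw [h1, hBv]
          have h3 : (fun i => B' i 0) = α⁻¹ • (P' *ᵥ (S' *ᵥ v)) := by
            rw [h2, smul_smul, inv_mul_cancel₀ hαne, one_smul]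
          rw [h3]
          exact Submodule.smul_mem _ _ ⟨S' *ᵥ v, rfl⟩
        rw [hBv u]
        exact Submodule.smul_mem _ _ hb
      have hinv : ∀ y ∈ W, A'.mulVecLin y ∈ W := by
        rintro y ⟨x, rfl⟩
        have : A' *ᵥ (P' *ᵥ x) = P' *ᵥ (S' *ᵥ x) - B' *ᵥ (L' *ᵥ x) :=
          eq_sub_of_add_eq (key x).symm
        show A' *ᵥ (P' *ᵥ x) ∈ W
        rw [this]
        exact Submodule.sub_mem _ ⟨S' *ᵥ x, rfl⟩ (hbW _)
      -- show W = ⊤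
      have hWtop : W = ⊤ := by
        by_contra hWne
        have hlt : W < ⊤ := lt_top_iff_ne_top.mpr hWne
        have : Nontrivial ((Fin n → ℂ) ⧸ W) := Submodule.Quotient.nontrivial_iff.mpr hlt.ne
        have hle : W ≤ Submodule.comap A'.mulVecLin W := fun x hx =>
          Submodule.mem_comap.mpr (hinv x hx)
        set Abar := Submodule.mapQ W W A'.mulVecLin hle with hAbar
        obtain ⟨μ, hμ⟩ := Module.End.exists_eigenvalue Abar
        obtain ⟨q0, hq0⟩ := hμ.exists_hasEigenvector
        set E : ((Fin n → ℂ) ⧸ W) →ₗ[ℂ] ((Fin n → ℂ) ⧸ W) :=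
          Abar - μ • LinearMap.id with hE
        -- Abar - μ is not injective, hence not surjective
        have hnotinj : ¬ Function.Injective E := by
          intro hinj
          apply hq0.right
          have : E q0 = E 0 := by
            simp [hE, hq0.apply_eq_smul]
          exact hinj this
        have hnotsurj : ¬ Function.Surjective E := fun h =>
          hnotinj (LinearMap.injective_iff_surjective.mpr h)
        apply hnotsurj
        -- controllability gives surjectivity of [A-μ, B], descend to quotient
        have hrk := hctrb μ
        have hrange : LinearMap.range (Matrix.fromCols (A' - μ • 1) B').mulVecLin = ⊤ := by
          apply Submodule.eq_top_of_finrank_eq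
          rw [Module.finrank_pi, Fintype.card_fin]
          exact hrk
        intro q
        obtain ⟨y, rfl⟩ := Submodule.mkQ_surjective W q
        have : ∃ u : (Fin n ⊕ Fin 1) → ℂ,
            (Matrix.fromCols (A' - μ • 1) B') *ᵥ u = y := by
          have := hrange ▸ Submodule.mem_top (R := ℂ) (x := y)
          exact this
        obtain ⟨u, hu⟩ := this
        refine ⟨Submodule.mkQ W (u ∘ Sum.inl), ?_⟩
        have hu' : (A' - μ • 1) *ᵥ (u ∘ Sum.inl) + B' *ᵥ (u ∘ Sum.inr) = y := by
          rw [← Matrix.fromCols_mulVec_sumElim]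
          rw [Sum.elim_comp_inl_inr]
          exact hu
        have hmk : Submodule.mkQ W (B' *ᵥ (u ∘ Sum.inr)) = 0 := by
          rw [Submodule.mkQ_apply, Submodule.Quotient.mk_eq_zero]
          exact hbW _
        have hAμ : (A' - μ • 1) *ᵥ (u ∘ Sum.inl)
            = A' *ᵥ (u ∘ Sum.inl) - μ • (u ∘ Sum.inl) := by
          rw [Matrix.sub_mulVec, Matrix.smul_mulVec, Matrix.one_mulVec]
        calc E (Submodule.mkQ W (u ∘ Sum.inl))
            = Submodule.mkQ W (A' *ᵥ (u ∘ Sum.inl) - μ • (u ∘ Sum.inl)) := by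
              simp [hE, hAbar, Submodule.mapQ_apply, map_sub, _root_.map_smul]
          _ = Submodule.mkQ W ((A' - μ • 1) *ᵥ (u ∘ Sum.inl)) := by rw [hAμ]
          _ = Submodule.mkQ W ((A' - μ • 1) *ᵥ (u ∘ Sum.inl) + B' *ᵥ (u ∘ Sum.inr)) := by
              rw [map_add, hmk, add_zero]
          _ = Submodule.mkQ W y := by rw [hu']
      -- rank P' = n, so ν = n and kernel is trivial
      have hrnP := LinearMap.finrank_range_add_finrank_ker P'.mulVecLin
      rw [Module.finrank_pi, Fintype.card_fin] at hrnP
      have hrange_fr : Module.finrank ℂ (LinearMap.range P'.mulVecLin) = n := by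
        rw [← hW, hWtop]
        simpa using Module.finrank_pi (ι := Fin n) ℂ
      rw [hrange_fr] at hrnP
      have : Module.finrank ℂ (LinearMap.ker P'.mulVecLin) = 0 := by omega
      exact Submodule.finrank_eq_zero.mp this
  -- Step 2: transfer injectivity to the real matrix
  have hker : LinearMap.ker Pi.mulVecLin = ⊥ := by
    rw [Submodule.eq_bot_iff]
    intro x hx
    have hx0 : Pi *ᵥ x = 0 := hx
    have : P' *ᵥ (fun i => (x i : ℂ)) = 0 := by
      rw [hP', sylv_map_mulVec, hx0]
      ext i; simp
    have hxc : (fun i => (x i : ℂ)) = 0 :=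
      (Submodule.eq_bot_iff _).mp hker' _ this
    ext i
    have h0 : ((x i : ℝ) : ℂ) = 0 := congrFun hxc i
    exact_mod_cast h0
  -- rank-nullity over ℝ
  have hrn := LinearMap.finrank_range_add_finrank_ker Pi.mulVecLin
  rw [Module.finrank_pi, Fintype.card_fin, hker, finrank_bot, add_zero] at hrn
  exact hrn
end

section
/- Let S ∈ ℝ^{ν×ν}, L ∈ ℝ^{1×ν}, and G ∈ ℝ^{ν×1} be such that the complex spectra of S and of S − G·L are disjoint. Then the identity matrix P = I_ν is the unique solution P ∈ ℝ^{ν×ν} of the Sylvester equation (S − G·L)·P + G·L = P·S. Consequently, if Π ∈ ℝ^{n×ν} solves A·Π + B·L = Π·S and one sets F = S − G·L and H = C·Π, then H·P = C·Π, i.e., the reduced-order model (F, G, H) achieves moment matching with the system (A, B, C) at the interpolation points given by the spectrum of S. -/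
open Matrix

open Polynomial

lemma root_mem_spectrum {m : ℕ} (M : Matrix (Fin m) (Fin m) ℂ) (μ : ℂ)
    (h : (M.charpoly).eval μ = 0) : μ ∈ spectrum ℂ M := by
  rw [spectrum.mem_iff]
  intro hu
  rw [Matrix.isUnit_iff_isUnit_det] at hu
  rw [Matrix.charpoly, eval_det, Matrix.matPolyEquiv_charmatrix] at h
  simp only [eval_sub, eval_X, eval_C] at h
  have : (Matrix.scalar (Fin m) μ - M) = algebraMap ℂ (Matrix (Fin m) (Fin m) ℂ) μ - M := rfl
  rw [this] at h
  exact (hu.ne_zero) h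

lemma sylvester_unique {m : ℕ} (F S Q : Matrix (Fin m) (Fin m) ℂ)
    (h : F * Q = Q * S) (hd : Disjoint (spectrum ℂ S) (spectrum ℂ F)) : Q = 0 := by
  have hpow : ∀ k : ℕ, F ^ k * Q = Q * S ^ k := by
    intro k; induction k with
    | zero => simp
    | succ k ih => rw [pow_succ, pow_succ, mul_assoc, h, ← mul_assoc, ih, mul_assoc]
  have hint : ∀ p : ℂ[X], (aeval F p) * Q = Q * (aeval S p) := by
    intro p
    induction p using Polynomial.induction_on' with
    | add p q hp hq => simp [map_add, add_mul, mul_add, hp, hq]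
    | monomial k a =>
        simp only [aeval_monomial, mul_assoc]
        rw [hpow k, ← mul_assoc, ← mul_assoc, Algebra.commutes, mul_assoc]
  have hc := hint S.charpoly
  rw [Matrix.aeval_self_charpoly, mul_zero] at hc
  have hsplit : S.charpoly = (Multiset.map (fun x : ℂ => X - C x) S.charpoly.roots).prod := by
    conv_lhs => rw [(IsAlgClosed.splits S.charpoly).eq_prod_roots_of_monic
      S.charpoly_monic]
  have hunit : IsUnit (aeval F S.charpoly) := by
    by_contra hnu
    rw [hsplit] at hnu
    obtain ⟨k, hk, hk0⟩ := spectrum.exists_mem_of_not_isUnit_aeval_prod hnu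
    exact (hd.ne_of_mem (root_mem_spectrum S k hk0) hk) rfl
  obtain ⟨u, hu⟩ := hunit
  calc Q = ↑u⁻¹ * (↑u * Q) := by rw [← mul_assoc, Units.inv_mul, one_mul]
  _ = 0 := by rw [hu, hc, mul_zero]

/-- If `σ(S) ∩ σ(S − G·L) = ∅`, then `P = I` is the unique solution of the
Sylvester equation `(S − G·L)·P + G·L = P·S`; consequently, for any solution `Π` of
`A·Π + B·L = Π·S`, the reduced-order model `(F, G, H) = (S − G·L, G, C·Π)` satisfies
`H·P = C·Π`, i.e., it achieves moment matching at `σ(S)`. -/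
theorem identity_unique_solution_and_moment_matching (n ν : ℕ)
    (A : Matrix (Fin n) (Fin n) ℝ) (B : Matrix (Fin n) (Fin 1) ℝ)
    (C : Matrix (Fin 1) (Fin n) ℝ)
    (S : Matrix (Fin ν) (Fin ν) ℝ) (L : Matrix (Fin 1) (Fin ν) ℝ)
    (G : Matrix (Fin ν) (Fin 1) ℝ)
    (hdisj : Disjoint (spectrum ℂ (S.map (algebraMap ℝ ℂ)))
      (spectrum ℂ ((S - G * L).map (algebraMap ℝ ℂ))))
    (Pi : Matrix (Fin n) (Fin ν) ℝ) (hPi : A * Pi + B * L = Pi * S) :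
    ((S - G * L) * (1 : Matrix (Fin ν) (Fin ν) ℝ) + G * L = (1 : Matrix (Fin ν) (Fin ν) ℝ) * S
      ∧ ∀ P : Matrix (Fin ν) (Fin ν) ℝ, (S - G * L) * P + G * L = P * S → P = 1)
    ∧ (C * Pi) * (1 : Matrix (Fin ν) (Fin ν) ℝ) = C * Pi := by
  refine ⟨⟨by rw [mul_one, one_mul, sub_add_cancel], ?_⟩, Matrix.mul_one _⟩
  intro P hP
  have hQ : (S - G * L) * (P - 1) = (P - 1) * S := by
    have h1 : (S - G * L) * P = P * S - G * L := by
      rw [eq_sub_iff_add_eq]; exact hP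
    rw [mul_sub, mul_one, h1, sub_mul, one_mul]
    abel
  have hmap : ((S - G * L).map (algebraMap ℝ ℂ)) * ((P - 1).map (algebraMap ℝ ℂ))
      = ((P - 1).map (algebraMap ℝ ℂ)) * (S.map (algebraMap ℝ ℂ)) := by
    rw [← Matrix.map_mul, ← Matrix.map_mul, hQ]
  have h0 := sylvester_unique _ _ _ hmap hdisj
  have hP1 : P - 1 = 0 := by
    ext i j
    have := congrFun (congrFun h0 i) j
    simp only [Matrix.map_apply, Matrix.zero_apply] at this ⊢
    exact (algebraMap ℝ ℂ).injective (by simpa using this)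
  exact sub_eq_zero.mp hP1
end

section
/- (Corollary 2, explicit formula) Let A ∈ ℝ^{n×n} be Hurwitz, B ∈ ℝ^{n×1}, S ∈ ℝ^{ν×ν}, L ∈ ℝ^{1×ν}, and let Π ∈ ℝ^{n×ν} be a solution of the Sylvester equation A·Π + B·L = Π·S with rank ν (full column rank). Let Q ∈ ℝ^{n×n} be symmetric positive definite and let P ∈ ℝ^{n×n} be the symmetric positive definite solution of the Lyapunov equation Aᵀ·P + P·A = −Q. Then the matrix Πᵀ·P·Π is invertible, and with G := (Πᵀ·P·Π)⁻¹·Πᵀ·P·B, the matrix S − G·L is Hurwitz. -/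
open Matrix

/-- Real part of a complexified real quadratic form. -/
lemma re_dot_eq {m : Type*} [Fintype m] (R : Matrix m m ℝ) (v : m → ℂ) :
    (star v ⬝ᵥ ((R.map (algebraMap ℝ ℂ)) *ᵥ v)).re
      = (fun i => (v i).re) ⬝ᵥ (R *ᵥ fun i => (v i).re)
        + (fun i => (v i).im) ⬝ᵥ (R *ᵥ fun i => (v i).im) := by
  classical
  simp only [dotProduct, mulVec, Pi.star_apply, Matrix.map_apply, Finset.mul_sum,
    Complex.re_sum, ← Finset.sum_add_distrib]
  refine Finset.sum_congr rfl fun i _ => Finset.sum_congr rfl fun j _ => ?_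
  simp [Complex.mul_re, Complex.mul_im]

lemma re_dot_pos {m : Type*} [Fintype m] {R : Matrix m m ℝ} (hR : R.PosDef) {v : m → ℂ}
    (hv : v ≠ 0) : 0 < (star v ⬝ᵥ ((R.map (algebraMap ℝ ℂ)) *ᵥ v)).re := by
  rw [re_dot_eq]
  set x : m → ℝ := fun i => (v i).re with hx
  set y : m → ℝ := fun i => (v i).im with hy
  have hxy : x ≠ 0 ∨ y ≠ 0 := by
    by_contra h
    push_neg at h
    apply hv
    funext i
    have h1 := congrFun h.1 i
    have h2 := congrFun h.2 i
    simp only [hx, hy, Pi.zero_apply] at h1 h2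
    exact Complex.ext h1 h2
  have key : ∀ z : m → ℝ, 0 ≤ z ⬝ᵥ (R *ᵥ z) := fun z => by
    simpa using hR.posSemidef.dotProduct_mulVec_nonneg z
  have key' : ∀ z : m → ℝ, z ≠ 0 → 0 < z ⬝ᵥ (R *ᵥ z) := fun z hz => by
    simpa using hR.dotProduct_mulVec_pos hz
  rcases hxy with h | h
  · have := key' x h; have := key y; linarith
  · have := key' y h; have := key x; linarith

lemma exists_eigvec {k : ℕ} (F : Matrix (Fin k) (Fin k) ℂ) (μ : ℂ) (h : μ ∈ spectrum ℂ F) :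
    ∃ v : Fin k → ℂ, v ≠ 0 ∧ F *ᵥ v = μ • v := by
  rw [← AlgEquiv.spectrum_eq (Matrix.toLinAlgEquiv' : Matrix (Fin k) (Fin k) ℂ ≃ₐ[ℂ] _)] at h
  have hev := Module.End.hasEigenvalue_iff_mem_spectrum.mpr h
  obtain ⟨v, hv⟩ := hev.exists_hasEigenvector
  exact ⟨v, hv.right, hv.apply_eq_smul⟩

lemma posdef_conj {n ν : ℕ} {P : Matrix (Fin n) (Fin n) ℝ} (hP : P.PosDef)
    {Pi : Matrix (Fin n) (Fin ν) ℝ} (hinj : Function.Injective Pi.mulVec) :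
    (Piᵀ * P * Pi).PosDef := by
  rw [← Matrix.conjTranspose_eq_transpose_of_trivial]
  refine Matrix.PosDef.of_dotProduct_mulVec_pos ?_ ?_
  · exact isHermitian_conjTranspose_mul_mul _ hP.1
  · intro x hx
    have hx' : Pi *ᵥ x ≠ 0 := fun h => hx (hinj (by simpa using h))
    simpa only [star_mulVec, dotProduct_mulVec, vecMul_vecMul] using hP.dotProduct_mulVec_pos hx'

/-- A real square matrix is Hurwitz if all its complex eigenvalues have negative real part. -/
def IsHurwitz {m : Type*} [Fintype m] [DecidableEq m] (M : Matrix m m ℝ) : Prop :=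
  ∀ μ ∈ spectrum ℂ (M.map (algebraMap ℝ ℂ)), μ.re < 0

/-- **Corollary 2, explicit formula.** Let `A` be Hurwitz, `Π` a full-column-rank
solution of the Sylvester equation `A·Π + B·L = Π·S`, `Q ≻ 0`, and `P ≻ 0` the solution of the
Lyapunov equation `Aᵀ·P + P·A = −Q`. Then `Πᵀ·P·Π` is invertible and, with
`G = (Πᵀ·P·Π)⁻¹·Πᵀ·P·B`, the matrix `S − G·L` is Hurwitz. -/
theorem cor2_explicit_formula (n ν : ℕ)
    (A : Matrix (Fin n) (Fin n) ℝ) (B : Matrix (Fin n) (Fin 1) ℝ)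
    (S : Matrix (Fin ν) (Fin ν) ℝ) (L : Matrix (Fin 1) (Fin ν) ℝ)
    (hA : IsHurwitz A)
    (Pi : Matrix (Fin n) (Fin ν) ℝ) (hPi : A * Pi + B * L = Pi * S)
    (hrank : Pi.rank = ν)
    (Q : Matrix (Fin n) (Fin n) ℝ) (hQ : Q.PosDef)
    (P : Matrix (Fin n) (Fin n) ℝ) (hP : P.PosDef)
    (hLyap : Aᵀ * P + P * A = -Q) :
    IsUnit (Piᵀ * P * Pi)
      ∧ IsHurwitz (S - ((Piᵀ * P * Pi)⁻¹ * (Piᵀ * P * B)) * L) := by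
  classical
  -- injectivity of Π
  have hinj : Function.Injective Pi.mulVec := by
    have h := LinearMap.finrank_range_add_finrank_ker Pi.mulVecLin
    rw [Matrix.rank] at hrank
    rw [hrank, Module.finrank_pi] at h
    simp at h
    exact fun a b hab => LinearMap.ker_eq_bot.mp h hab
  set M : Matrix (Fin ν) (Fin ν) ℝ := Piᵀ * P * Pi with hMdef
  have hM : M.PosDef := posdef_conj hP hinj
  have hMunit : IsUnit M := hM.isUnit
  refine ⟨hMunit, ?_⟩
  set G : Matrix (Fin ν) (Fin 1) ℝ := M⁻¹ * (Piᵀ * P * B) with hGdef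
  set F : Matrix (Fin ν) (Fin ν) ℝ := S - G * L with hFdef
  -- M is symmetric
  have hPsym : Pᵀ = P := by
    have := hP.1
    rwa [Matrix.IsHermitian, Matrix.conjTranspose_eq_transpose_of_trivial] at this
  have hQsym : Qᵀ = Q := by
    have := hQ.1
    rwa [Matrix.IsHermitian, Matrix.conjTranspose_eq_transpose_of_trivial] at this
  have hMsym : Mᵀ = M := by
    rw [hMdef, Matrix.transpose_mul, Matrix.transpose_mul, Matrix.transpose_transpose, hPsym,
      Matrix.mul_assoc]
  -- Lyapunov identity for F
  have hMG : M * G = Piᵀ * P * B := by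
    rw [hGdef, ← Matrix.mul_assoc, Matrix.mul_nonsing_inv _
      ((Matrix.isUnit_iff_isUnit_det M).mp hMunit), Matrix.one_mul]
  have hMF : M * F = Piᵀ * P * A * Pi := by
    have hPS : Pi * S = A * Pi + B * L := hPi.symm
    rw [hFdef, Matrix.mul_sub, ← Matrix.mul_assoc, hMG]
    rw [hMdef]
    calc Piᵀ * P * Pi * S - Piᵀ * P * B * L
        = Piᵀ * P * (Pi * S) - Piᵀ * P * B * L := by rw [Matrix.mul_assoc (Piᵀ * P)]
      _ = Piᵀ * P * A * Pi := by
          rw [hPS]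
          simp only [Matrix.mul_add, Matrix.mul_assoc]
          abel
  have hFM : Fᵀ * M = Piᵀ * Aᵀ * P * Pi := by
    have := congrArg Matrix.transpose hMF
    rw [Matrix.transpose_mul, hMsym] at this
    rw [this]
    simp only [Matrix.transpose_mul, Matrix.transpose_transpose, hPsym, Matrix.mul_assoc]
  have key : M * F + Fᵀ * M = -(Piᵀ * Q * Pi) := by
    rw [hMF, hFM]
    have : Piᵀ * P * A * Pi + Piᵀ * Aᵀ * P * Pi = Piᵀ * (Aᵀ * P + P * A) * Pi := by
      simp only [Matrix.mul_add, Matrix.add_mul, Matrix.mul_assoc]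
      abel
    rw [this, hLyap]
    rw [Matrix.mul_neg, Matrix.neg_mul]
  -- complex part
  intro μ hμ
  obtain ⟨v, hv, hvF⟩ := exists_eigvec _ μ hμ
  set φ : ℝ →+* ℂ := algebraMap ℝ ℂ with hφ
  set Fc := F.map φ with hFc
  set Mc := M.map φ with hMc
  have hFceq : (S - ((Piᵀ * P * Pi)⁻¹ * (Piᵀ * P * B)) * L).map (algebraMap ℝ ℂ) = Fc := rfl
  have hq : 0 < (star v ⬝ᵥ (Mc *ᵥ v)).re := re_dot_pos hM hv
  have hr : 0 < (star v ⬝ᵥ ((Piᵀ * Q * Pi).map φ *ᵥ v)).re :=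
    re_dot_pos (posdef_conj hQ hinj) hv
  -- star (Fc *ᵥ v)
  have hstar : Fc *ᵥ star v = star (Fc *ᵥ v) := by
    rw [Matrix.star_mulVec]
    have : Fcᴴ = Fcᵀ := by
      rw [hFc, ← Matrix.conjTranspose_map φ (fun r => (Complex.conj_ofReal r).symm),
        Matrix.conjTranspose_eq_transpose_of_trivial]
      rfl
    rw [this, Matrix.vecMul_transpose]
  have hkeyC : (M * F + Fᵀ * M).map φ = -((Piᵀ * Q * Pi).map φ) := by
    rw [key]; ext i j; simp only [Matrix.map_apply, Matrix.neg_apply, map_neg]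
  have hMapMul : ∀ (X Y : Matrix (Fin ν) (Fin ν) ℝ), (X * Y).map φ = X.map φ * Y.map φ :=
    fun X Y => Matrix.map_mul
  have hE : star v ⬝ᵥ (((M * F + Fᵀ * M).map φ) *ᵥ v)
      = (μ + (starRingEnd ℂ) μ) * (star v ⬝ᵥ (Mc *ᵥ v)) := by
    rw [Matrix.map_add φ (fun a b => map_add φ a b), hMapMul, hMapMul, Matrix.add_mulVec]
    have hTr : (Fᵀ).map φ = Fcᵀ := by rw [hFc]; rfl
    rw [hTr]
    rw [dotProduct_add]
    have h1 : star v ⬝ᵥ ((M.map φ * Fc) *ᵥ v) = μ * (star v ⬝ᵥ (Mc *ᵥ v)) := by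
      rw [← Matrix.mulVec_mulVec, hvF, Matrix.mulVec_smul, dotProduct_smul, ← hMc,
        smul_eq_mul]
    have h2 : star v ⬝ᵥ ((Fcᵀ * M.map φ) *ᵥ v) = (starRingEnd ℂ) μ * (star v ⬝ᵥ (Mc *ᵥ v)) := by
      rw [← Matrix.mulVec_mulVec, dotProduct_mulVec, Matrix.vecMul_transpose]
      have : Fc *ᵥ star v = (starRingEnd ℂ) μ • star v := by
        rw [hstar, hvF, star_smul]
        rfl
      rw [this, smul_dotProduct, ← hMc, smul_eq_mul]
    rw [h1, h2, add_mul]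
  rw [hkeyC] at hE
  have hEneg : star v ⬝ᵥ (-((Piᵀ * Q * Pi).map φ) *ᵥ v)
      = -(star v ⬝ᵥ ((Piᵀ * Q * Pi).map φ *ᵥ v)) := by
    rw [Matrix.neg_mulVec, dotProduct_neg]
  rw [hEneg] at hE
  -- take real parts
  have hre := congrArg Complex.re hE.symm
  rw [Complex.add_conj] at hre
  rw [Complex.re_ofReal_mul, Complex.neg_re] at hre
  nlinarith [hq, hr]
end

section
/- (Lyapunov inequality implies Hurwitz) Let M ∈ ℝ^{ν×ν} and let X ∈ ℝ^{ν×ν} be symmetric positive definite such that Mᵀ·X + X·M is negative definite. Then M is Hurwitz, i.e., every eigenvalue of M (viewed as a complex matrix) has negative real part. -/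
open Matrix

lemma re_dot_aux (ν : ℕ) (A : Matrix (Fin ν) (Fin ν) ℝ) (v : Fin ν → ℂ) :
    (star v ⬝ᵥ ((A.map (algebraMap ℝ ℂ)) *ᵥ v)).re =
      (fun i => (v i).re) ⬝ᵥ (A *ᵥ fun i => (v i).re)
      + (fun i => (v i).im) ⬝ᵥ (A *ᵥ fun i => (v i).im) := by
  simp only [dotProduct, mulVec, map_apply, Pi.star_apply, Complex.coe_algebraMap]
  simp only [Finset.mul_sum, ← Finset.sum_add_distrib, Complex.re_sum]
  congr 1; ext i; congr 1; ext j
  simp [Complex.mul_re, Complex.ofReal_re, Complex.ofReal_im]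

lemma mulVec_star_aux (ν : ℕ) (A : Matrix (Fin ν) (Fin ν) ℝ) (v : Fin ν → ℂ) :
    (A.map (algebraMap ℝ ℂ)) *ᵥ (star v) = star ((A.map (algebraMap ℝ ℂ)) *ᵥ v) := by
  funext i
  simp [mulVec, dotProduct, Complex.coe_algebraMap, map_sum, Complex.conj_ofReal, mul_comm]

/-- **Lyapunov inequality implies Hurwitz.** If `X ≻ 0` and
`Mᵀ·X + X·M ≺ 0`, then `M` is Hurwitz. -/
theorem lyapunov_implies_hurwitz (ν : ℕ)
    (M X : Matrix (Fin ν) (Fin ν) ℝ) (hX : X.PosDef)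
    (hLyap : (-(Mᵀ * X + X * M)).PosDef) :
    IsHurwitz M := by
  intro μ hμ
  set Mc := M.map (algebraMap ℝ ℂ) with hMc
  set Xc := X.map (algebraMap ℝ ℂ) with hXc
  -- eigenvector
  have hev : Module.End.HasEigenvalue (Matrix.toLin' Mc) μ := by
    rw [Module.End.hasEigenvalue_iff_mem_spectrum]
    rwa [show Matrix.toLin' Mc = (Matrix.toLinAlgEquiv (Pi.basisFun ℂ (Fin ν))) Mc from rfl,
      AlgEquiv.spectrum_eq]
  obtain ⟨v, hv⟩ := hev.exists_hasEigenvector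
  have hv0 : v ≠ 0 := hv.right
  have hMv : Mc *ᵥ v = μ • v := by
    rw [← Matrix.toLin'_apply]; exact hv.apply_eq_smul
  set N : Matrix (Fin ν) (Fin ν) ℝ := Mᵀ * X + X * M with hN
  have hNc : N.map (algebraMap ℝ ℂ) = Mcᵀ * Xc + Xc * Mc := by
    ext i j
    simp [hN, hMc, hXc, Matrix.mul_apply, Matrix.add_apply, Matrix.map_apply, map_sum]
  -- key identity
  have key : star v ⬝ᵥ ((N.map (algebraMap ℝ ℂ)) *ᵥ v)
      = ((2 * μ.re : ℝ) : ℂ) * (star v ⬝ᵥ (Xc *ᵥ v)) := by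
    rw [hNc, add_mulVec, dotProduct_add, ← mulVec_mulVec, ← mulVec_mulVec]
    have h1 : star v ⬝ᵥ (Xc *ᵥ (Mc *ᵥ v)) = μ * (star v ⬝ᵥ (Xc *ᵥ v)) := by
      rw [hMv, mulVec_smul, dotProduct_smul, smul_eq_mul]
    have h2 : star v ⬝ᵥ (Mcᵀ *ᵥ (Xc *ᵥ v)) = (starRingEnd ℂ) μ * (star v ⬝ᵥ (Xc *ᵥ v)) := by
      rw [dotProduct_mulVec, vecMul_transpose, mulVec_star_aux, hMv, star_smul,
        smul_dotProduct, smul_eq_mul]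
      rfl
    rw [h1, h2, ← add_mul]
    congr 1
    rw [Complex.ext_iff]
    simp [Complex.add_re, Complex.add_im, Complex.conj_re, Complex.conj_im]
    ring
  -- take real parts
  set r : Fin ν → ℝ := fun i => (v i).re with hr
  set s : Fin ν → ℝ := fun i => (v i).im with hs
  have hre : r ⬝ᵥ (N *ᵥ r) + s ⬝ᵥ (N *ᵥ s)
      = 2 * μ.re * (r ⬝ᵥ (X *ᵥ r) + s ⬝ᵥ (X *ᵥ s)) := by
    have := congrArg Complex.re key
    rwa [re_dot_aux, Complex.re_ofReal_mul, re_dot_aux] at this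
  -- positivity facts
  have hrs : r ≠ 0 ∨ s ≠ 0 := by
    by_contra h
    push_neg at h
    apply hv0
    funext i
    have h1 := congrFun h.1 i
    have h2 := congrFun h.2 i
    exact Complex.ext h1 h2
  have hXq : ∀ x : Fin ν → ℝ, x ≠ 0 → 0 < x ⬝ᵥ (X *ᵥ x) := fun x hx => hX.dotProduct_mulVec_pos hx
  have hXq0 : ∀ x : Fin ν → ℝ, 0 ≤ x ⬝ᵥ (X *ᵥ x) := fun x => hX.posSemidef.dotProduct_mulVec_nonneg x
  have hNq : ∀ x : Fin ν → ℝ, x ≠ 0 → x ⬝ᵥ (N *ᵥ x) < 0 := by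
    intro x hx
    have := hLyap.dotProduct_mulVec_pos hx
    rw [neg_mulVec, dotProduct_neg] at this
    simpa using this
  have hNq0 : ∀ x : Fin ν → ℝ, x ⬝ᵥ (N *ᵥ x) ≤ 0 := by
    intro x
    have := hLyap.posSemidef.dotProduct_mulVec_nonneg x
    rw [neg_mulVec, dotProduct_neg] at this
    simpa using this
  have hXpos : 0 < r ⬝ᵥ (X *ᵥ r) + s ⬝ᵥ (X *ᵥ s) := by
    rcases hrs with h | h
    · exact add_pos_of_pos_of_nonneg (hXq r h) (hXq0 s)
    · exact add_pos_of_nonneg_of_pos (hXq0 r) (hXq s h)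
  have hNneg : r ⬝ᵥ (N *ᵥ r) + s ⬝ᵥ (N *ᵥ s) < 0 := by
    rcases hrs with h | h
    · exact add_neg_of_neg_of_nonpos (hNq r h) (hNq0 s)
    · exact add_neg_of_nonpos_of_neg (hNq0 r) (hNq s h)
  nlinarith [hre, hXpos, hNneg]
end
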